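/- Let ξ be an n×n̄ complex matrix such that Re(trace(Π σ ξ)) = 0 for all σ ∈ u(n), and suppose the top n̄×n̄ block ξ₁ is diagonalizable as ξ₁ = V† D V with V ∈ U(n̄) and D diagonal. Then D is a real matrix. -/

import Mathlib

open Matrix

namespace Matrix

variable {m n o : Type*} {R : Type*}

section UnitaryConj

variable [Fintype n] [DecidableEq n] [CommRing R] [StarRing R]
  {V : Matrix n n R}

theorem unitary_conj_mul_unitary_conj (hV : V ∈ unitaryGroup n R)
    (M N : Matrix n n R) : (Vᴴ * M * V) * (Vᴴ * N * V) = Vᴴ * (M * N) * V := by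
  have hVV : V * Vᴴ = 1 := mem_unitaryGroup_iff.mp hV
  simp only [Matrix.mul_assoc]
  rw [← Matrix.mul_assoc V Vᴴ, hVV, Matrix.one_mul]

theorem trace_unitary_conj (hV : V ∈ unitaryGroup n R) (M : Matrix n n R) :
    trace (Vᴴ * M * V) = trace M := by
  rw [trace_mul_cycle, ← star_eq_conjTranspose, mem_unitaryGroup_iff.mp hV, Matrix.one_mul]

theorem trace_unitary_conj_mul_unitary_conj (hV : V ∈ unitaryGroup n R) (M N : Matrix n n R) :
    trace ((Vᴴ * M * V) * (Vᴴ * N * V)) = trace (M * N) := by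
  rw [unitary_conj_mul_unitary_conj hV, trace_unitary_conj hV]

theorem unitary_conj_diagonal_conjTranspose_of_star_eq_neg {w : n → R} (hw : star w = -w) :
    (Vᴴ * diagonal w * V)ᴴ = -(Vᴴ * diagonal w * V) := by
  rw [conjTranspose_mul, conjTranspose_mul, conjTranspose_conjTranspose, diagonal_conjTranspose, hw,
    Pi.neg_def, ← diagonal_neg, Matrix.neg_mul, Matrix.mul_neg, Matrix.mul_assoc]

end UnitaryConj

theorem fromBlocks_zero_conjTranspose_of_conjTranspose_eq_neg [AddGroup R] [StarAddMonoid R]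
    {A : Matrix n n R} (hA : Aᴴ = -A) :
    (fromBlocks A 0 0 0 : Matrix (n ⊕ o) (n ⊕ o) R)ᴴ = -fromBlocks A 0 0 0 := by
  rw [fromBlocks_conjTranspose, hA, fromBlocks_neg]
  simp

theorem fromCols_one_zero_mul_fromBlocks_mul_fromRows [Fintype n] [Fintype o] [DecidableEq n]
    [Semiring R] (A : Matrix n n R) (B : Matrix n o R) (C : Matrix o n R)
    (D : Matrix o o R) (ξ₁ : Matrix n m R) (ξ₂ : Matrix o m R) :
    fromCols (1 : Matrix n n R) (0 : Matrix n o R) * fromBlocks A B C D * fromRows ξ₁ ξ₂ =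
      A * ξ₁ + B * ξ₂ := by
  rw [fromCols_mul_fromBlocks, fromCols_mul_fromRows]
  simp

end Matrix

/-- If `Re(trace(Π σ ξ)) = 0` for all anti-Hermitian `σ`, and the top block
`ξ₁` of `ξ` is diagonalizable as `ξ₁ = Vᴴ D V` with `V` unitary and `D` diagonal,
then `D` is a real matrix. -/
theorem critical_point_diag_real (nbar k : ℕ)
    (ξ₁ : Matrix (Fin nbar) (Fin nbar) ℂ)
    (ξ₂ : Matrix (Fin k) (Fin nbar) ℂ)
    (ξ : Matrix (Fin nbar ⊕ Fin k) (Fin nbar) ℂ)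
    (hξ : ξ = Matrix.fromRows ξ₁ ξ₂)
    (P : Matrix (Fin nbar) (Fin nbar ⊕ Fin k) ℂ)
    (hP : P = Matrix.fromCols 1 0)
    (hcrit : ∀ σ : Matrix (Fin nbar ⊕ Fin k) (Fin nbar ⊕ Fin k) ℂ,
      σᴴ = -σ → (Matrix.trace (P * σ * ξ)).re = 0)
    (V : Matrix (Fin nbar) (Fin nbar) ℂ) (hV : V ∈ Matrix.unitaryGroup (Fin nbar) ℂ)
    (D : Fin nbar → ℂ) (hdiag : ξ₁ = Vᴴ * Matrix.diagonal D * V) :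
    ∀ i, (D i).im = 0 := by
  intro i
  -- Test against `σ = diag(Vᴴ (I eᵢ) V, 0)`, which picks out `Re (I * D i) = -Im (D i)`.
  set w : Fin nbar → ℂ := Pi.single i Complex.I
  have hw : star w = -w := by
    ext j
    by_cases hj : j = i <;> simp [w, hj]
  have h := hcrit _ (fromBlocks_zero_conjTranspose_of_conjTranspose_eq_neg
    (unitary_conj_diagonal_conjTranspose_of_star_eq_neg (V := V) hw))
  rw [hP, hξ, fromCols_one_zero_mul_fromBlocks_mul_fromRows, Matrix.zero_mul, add_zero, hdiag,
    trace_unitary_conj_mul_unitary_conj hV, diagonal_mul_diagonal, trace_diagonal,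
    Finset.sum_eq_single i (fun j _ hj => by simp [w, hj]) (by simp)] at h
  simpa [w] using h
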